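/- arXiv:0904.0333 — 3 statements merged into one kernel-verified Lean document; each statement's English description precedes it below -/
import Mathlib

section
/- For disjoint index sets a, b, c and a square matrix M with all principal submatrices invertible, inv_{a∪b}(inv_{b∪c} M) = inv_{a∪c} M; that is, partial inversion on overlapping index sets cancels on the common indices. -/
/-!
`N` is the partial inverse of `M` on `U` when, for every `x`, it maps the vector equal to `M x` on
`U` and to `x` off `U` to the vector equal to `x` on `U` and to `M x` off `U`. If the principal
minor of `M` on `U` is nonzero, the vectors of the first kind fill the whole space, so this
relation determines `N`. The relations on `U` (from `M` to `N`) and on `V` (from `N` to `P`)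
compose to the relation on `U ∆ V` (from `M` to `P`), and one pivot step on `k` is the relation
on `{k}`. Hence sweeping `M` along a list `l` gives the partial inverse on the indices occurring
an odd number of times in `l`, and both sides of the theorem are the partial inverse on `a ∆ c`,
the indices of `b` occurring twice on the left.
-/

/-- Partial inversion of a square real matrix with respect to a single index `k`. -/
noncomputable def invStep {ι : Type*} [DecidableEq ι] (M : Matrix ι ι ℝ) (k : ι) : Matrix ι ι ℝ :=
  Matrix.of fun i j =>
    if i = k then (if j = k then 1 / M k k else - M k j / M k k)
    else if j = k then M i k / M k k
    else M i j - M i k * M k j / M k k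

/-- Partial inversion with respect to a sequence of indices, applied in order. -/
noncomputable def invList {ι : Type*} [DecidableEq ι] (l : List ι) (M : Matrix ι ι ℝ) : Matrix ι ι ℝ :=
  l.foldl invStep M

/-- All principal submatrices of `M` are invertible. -/
def allPrincipalInvertible {ι : Type*} [Fintype ι] [DecidableEq ι]
    (M : Matrix ι ι ℝ) : Prop :=
  ∀ s : Finset ι,
    (M.submatrix (fun i : s => (i : ι)) (fun i : s => (i : ι))).det ≠ 0

open Finset

namespace Matrix

lemma mulVec_apply_eq_add_sum_erase {ι α : Type*} [Fintype ι] [DecidableEq ι]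
    [NonUnitalNonAssocSemiring α] (A : Matrix ι ι α) (v : ι → α) (i k : ι) :
    (A *ᵥ v) i = A i k * v k + ∑ j ∈ univ.erase k, A i j * v j :=
  (add_sum_erase _ (fun j => A i j * v j) (mem_univ k)).symm

section Field

variable {ι K : Type*} [Fintype ι] [DecidableEq ι] [Field K]

def exchange (M : Matrix ι ι K) (U : Finset ι) : (ι → K) →ₗ[K] ι → K where
  toFun x := U.piecewise (M *ᵥ x) x
  map_add' x y := by
    ext i
    by_cases hi : i ∈ U <;> simp [hi, mulVec_add]
  map_smul' c x := by
    ext i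
    by_cases hi : i ∈ U <;> simp [hi, mulVec_smul]

lemma exchange_apply (M : Matrix ι ι K) (U : Finset ι) (x : ι → K) :
    exchange M U x = U.piecewise (M *ᵥ x) x := rfl

lemma exchange_injective {M : Matrix ι ι K} {U : Finset ι}
    (hU : (M.submatrix ((↑) : U → ι) (↑)).det ≠ 0) : Function.Injective (exchange M U) := by
  rw [← LinearMap.ker_eq_bot, LinearMap.ker_eq_bot']
  intro x hx
  have hoff : ∀ i ∉ U, x i = 0 := fun i hi => by
    simpa [exchange_apply, hi] using congrFun hx i
  have hon : ∀ i ∈ U, (M *ᵥ x) i = 0 := fun i hi => by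
    simpa [exchange_apply, hi] using congrFun hx i
  have hrestrict : M.submatrix ((↑) : U → ι) (↑) *ᵥ (fun j : U => x j) = 0 := by
    ext i
    rw [Pi.zero_apply, ← hon i i.2]
    simp only [mulVec, dotProduct, submatrix_apply]
    rw [Finset.sum_coe_sort U fun j => M i j * x j]
    exact Finset.sum_subset (subset_univ U) fun j _ hj => by rw [hoff j hj, mul_zero]
  ext i
  by_cases hi : i ∈ U
  · exact congrFun (eq_zero_of_mulVec_eq_zero hU hrestrict) ⟨i, hi⟩
  · exact hoff i hi

lemma exchange_surjective {M : Matrix ι ι K} {U : Finset ι}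
    (hU : (M.submatrix ((↑) : U → ι) (↑)).det ≠ 0) : Function.Surjective (exchange M U) :=
  LinearMap.injective_iff_surjective.mp (exchange_injective hU)

def IsPartialInverse (U : Finset ι) (M N : Matrix ι ι K) : Prop :=
  ∀ x, N *ᵥ exchange M U x = U.piecewise x (M *ᵥ x)

lemma isPartialInverse_empty (M : Matrix ι ι K) : IsPartialInverse ∅ M M := by
  intro x
  simp [exchange_apply]

namespace IsPartialInverse

variable {U V : Finset ι} {M N P : Matrix ι ι K}

lemma exchange_exchange (h : IsPartialInverse U M N) (V : Finset ι) (x : ι → K) :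
    exchange N V (exchange M U x) = exchange M (symmDiff U V) x := by
  ext i
  have hNx := congrFun (h x) i
  by_cases hU : i ∈ U <;> by_cases hV : i ∈ V <;>
    simp_all [exchange_apply, mem_symmDiff]

lemma trans (h₁ : IsPartialInverse U M N) (h₂ : IsPartialInverse V N P) :
    IsPartialInverse (symmDiff U V) M P := by
  intro x
  rw [← h₁.exchange_exchange, h₂]
  ext i
  have hNx := congrFun (h₁ x) i
  by_cases hU : i ∈ U <;> by_cases hV : i ∈ V <;>
    simp_all [exchange_apply, mem_symmDiff]

lemma eq (hU : (M.submatrix ((↑) : U → ι) (↑)).det ≠ 0) (hN : IsPartialInverse U M N)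
    (hP : IsPartialInverse U M P) : N = P := by
  refine mulVec_injective (funext fun y => ?_)
  obtain ⟨x, rfl⟩ := exchange_surjective hU y
  rw [hN, hP]

/-- `exchange N {k}` is injective, being `exchange M (U ∆ {k})` composed with the inverse of
`exchange M U`; if `N k k` vanished, it would kill `Pi.single k 1`. -/
lemma diag_ne_zero (hU : (M.submatrix ((↑) : U → ι) (↑)).det ≠ 0) {k : ι}
    (hUk : (M.submatrix ((↑) : (symmDiff U {k} : Finset ι) → ι) (↑)).det ≠ 0)
    (h : IsPartialInverse U M N) : N k k ≠ 0 := by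
  intro hkk
  have hinj : Function.Injective (exchange N {k}) := by
    intro y z hyz
    obtain ⟨x, rfl⟩ := exchange_surjective hU y
    obtain ⟨x', rfl⟩ := exchange_surjective hU z
    rw [h.exchange_exchange, h.exchange_exchange] at hyz
    rw [exchange_injective hUk hyz]
  have hsingle : exchange N {k} (Pi.single k 1) = 0 := by
    ext i
    by_cases hik : i = k
    · subst hik; simp [exchange_apply, mulVec_single, hkk]
    · simp [exchange_apply, hik]
  simpa using congrFun (hinj (hsingle.trans (map_zero _).symm)) k

end IsPartialInverse

end Field

end Matrix

open Matrix

section Sweep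

variable {ι : Type*} [DecidableEq ι]

lemma isPartialInverse_invStep [Fintype ι] {N : Matrix ι ι ℝ} {k : ι} (hk : N k k ≠ 0) :
    IsPartialInverse {k} N (invStep N k) := by
  intro x
  set y := exchange N {k} x
  have hyk : y k = (N *ᵥ x) k := by simp [y, exchange_apply]
  have hy : ∀ j ∈ univ.erase k, y j = x j := fun j hj => by
    simp [y, exchange_apply, ne_of_mem_erase hj]
  have hNk := mulVec_apply_eq_add_sum_erase N x k k
  ext i
  rw [mulVec_apply_eq_add_sum_erase _ _ i k, hyk]
  by_cases hik : i = k
  · subst hik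
    have hrow : ∑ j ∈ univ.erase i, invStep N i i j * y j
        = -(∑ j ∈ univ.erase i, N i j * x j) / N i i := by
      rw [neg_div, sum_div, ← sum_neg_distrib]
      refine sum_congr rfl fun j hj => ?_
      simp [invStep, ne_of_mem_erase hj, hy j hj, neg_div, mul_div_right_comm]
    rw [hrow, hNk, piecewise_eq_of_mem _ _ _ (mem_singleton_self i)]
    simp only [invStep, of_apply, if_true]
    field_simp
    ring
  · have hrow : ∑ j ∈ univ.erase k, invStep N k i j * y j
        = ∑ j ∈ univ.erase k, N i j * x j - N i k / N k k * ∑ j ∈ univ.erase k, N k j * x j := by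
      rw [mul_sum, ← sum_sub_distrib]
      refine sum_congr rfl fun j hj => ?_
      simp only [invStep, of_apply, hik, ne_of_mem_erase hj, hy j hj, if_false]
      ring
    rw [hrow, hNk, piecewise_eq_of_notMem _ _ _ (by simpa using hik),
      mulVec_apply_eq_add_sum_erase N x i k]
    simp only [invStep, of_apply, hik, if_true, if_false]
    field_simp
    ring

def oddOccurrences : List ι → Finset ι
  | [] => ∅
  | k :: l => symmDiff {k} (oddOccurrences l)

lemma oddOccurrences_singleton (k : ι) : oddOccurrences [k] = {k} :=
  symmDiff_bot _

lemma oddOccurrences_append (l₁ l₂ : List ι) :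
    oddOccurrences (l₁ ++ l₂) = symmDiff (oddOccurrences l₁) (oddOccurrences l₂) := by
  induction l₁ with
  | nil => exact (bot_symmDiff _).symm
  | cons k l ih => simp [oddOccurrences, ih, symmDiff_assoc]

lemma invList_append (l₁ l₂ : List ι) (M : Matrix ι ι ℝ) :
    invList (l₁ ++ l₂) M = invList l₂ (invList l₁ M) :=
  List.foldl_append

lemma invList_singleton (k : ι) (M : Matrix ι ι ℝ) : invList [k] M = invStep M k :=
  rfl

lemma isPartialInverse_invList [Fintype ι] {M : Matrix ι ι ℝ} (hM : allPrincipalInvertible M)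
    (l : List ι) : IsPartialInverse (oddOccurrences l) M (invList l M) := by
  induction l using List.reverseRecOn with
  | nil => exact isPartialInverse_empty M
  | append_singleton l k ih =>
    rw [invList_append, invList_singleton, oddOccurrences_append, oddOccurrences_singleton]
    exact ih.trans (isPartialInverse_invStep (ih.diag_ne_zero (hM _) (hM _)))

end Sweep

theorem invList_cancel_general {ι : Type*} [Fintype ι] [DecidableEq ι]
    (M : Matrix ι ι ℝ) (hM : allPrincipalInvertible M)
    (la lb lc : List ι) :
    invList (la ++ lb) (invList (lb ++ lc) M) = invList (la ++ lc) M := by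
  have hsets : oddOccurrences ((lb ++ lc) ++ (la ++ lb)) = oddOccurrences (la ++ lc) := by
    simp only [oddOccurrences_append]
    ext i
    simp only [mem_symmDiff]
    tauto
  rw [← invList_append]
  refine (isPartialInverse_invList hM _).eq (hM _) ?_
  rw [hsets]
  exact isPartialInverse_invList hM _

/-- partial inversion on overlapping index sets cancels on common indices:
`inv_{a∪b}(inv_{b∪c} M) = inv_{a∪c} M` for disjoint `a`, `b`, `c`. -/
theorem invList_cancel {ι : Type*} [Fintype ι] [DecidableEq ι]
    (M : Matrix ι ι ℝ) (hM : allPrincipalInvertible M)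
    (la lb lc : List ι) (hna : la.Nodup) (hnb : lb.Nodup) (hnc : lc.Nodup)
    (hab : Disjoint la.toFinset lb.toFinset)
    (hbc : Disjoint lb.toFinset lc.toFinset)
    (hac : Disjoint la.toFinset lc.toFinset) :
    invList (la ++ lb) (invList (lb ++ lc) M) = invList (la ++ lc) M :=
  invList_cancel_general M hM la lb lc
end

section
/- Weak union for linear independencies: for a positive definite matrix Σ partitioned by disjoint sets a, b, c, d, if Π_{a|bc.d} = 0 then Π_{a|b.cd} = 0. -/
/-!
Since `Σ_{bc,bc|d}` is invertible, `Π_{a|bc.d} = 0` means `Σ_{a,bc|d} = 0`, i.e. both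
`Σ_{ab|d}` and `Σ_{ac|d}` vanish. Inverting `Σ_{cd,cd}` blockwise gives the quotient rule
`Σ_{ab|cd} = Σ_{ab|d} - Σ_{ac|d} Σ_{cc|d}⁻¹ Σ_{cb|d}`, so `Σ_{ab|cd} = 0` and hence
`Π_{a|b.cd} = 0`.
-/

variable {n : ℕ}

/-- The submatrix (block) of `S` with rows `x` and columns `y`. -/
def blk (S : Matrix (Fin n) (Fin n) ℝ) (x y : Finset (Fin n)) : Matrix x y ℝ :=
  Matrix.of fun i j => S i j

/-- The conditional covariance block `Σ_{xy|z} = Σ_{xy} − Σ_{xz} Σ_{zz}⁻¹ Σ_{zy}`. -/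
noncomputable def condCov (S : Matrix (Fin n) (Fin n) ℝ) (x y z : Finset (Fin n)) :
    Matrix x y ℝ :=
  blk S x y - blk S x z * (blk S z z)⁻¹ * blk S z y

/-- The partial regression coefficient matrix `Π_{x|y.z} = Σ_{xy|z} Σ_{yy|z}⁻¹`. -/
noncomputable def regCoef (S : Matrix (Fin n) (Fin n) ℝ) (x y z : Finset (Fin n)) :
    Matrix x y ℝ :=
  condCov S x y z * (condCov S y y z)⁻¹

open Matrix

section SchurComplement

variable {α l m₁ m₂ r : Type*} [CommRing α] [Fintype m₁] [Fintype m₂] [DecidableEq m₁]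
  [DecidableEq m₂]

/-- Block inversion through the Schur complement of `D`: the matrix form of the quotient rule
for conditional covariances. -/
theorem fromCols_mul_inv_fromBlocks_mul_fromRows (X₁ : Matrix l m₁ α) (X₂ : Matrix l m₂ α)
    {A : Matrix m₁ m₁ α} {B : Matrix m₁ m₂ α} {C : Matrix m₂ m₁ α} {D : Matrix m₂ m₂ α}
    (Y₁ : Matrix m₁ r α) (Y₂ : Matrix m₂ r α) (hD : IsUnit D) (hA : IsUnit (A - B * D⁻¹ * C)) :
    fromCols X₁ X₂ * (fromBlocks A B C D)⁻¹ * fromRows Y₁ Y₂ =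
      X₂ * D⁻¹ * Y₂ + (X₁ - X₂ * D⁻¹ * C) * (A - B * D⁻¹ * C)⁻¹ * (Y₁ - B * D⁻¹ * Y₂) := by
  have := hD.invertible
  rw [← invOf_eq_nonsing_inv D] at hA ⊢
  have := hA.invertible
  have := fromBlocks₂₂Invertible A B C D
  rw [← invOf_eq_nonsing_inv, ← invOf_eq_nonsing_inv, invOf_fromBlocks₂₂_eq,
    fromCols_mul_fromBlocks, fromCols_mul_fromRows]
  simp only [Matrix.mul_sub, Matrix.sub_mul, Matrix.mul_add, Matrix.add_mul, Matrix.mul_neg,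
    Matrix.neg_mul, Matrix.mul_assoc]
  abel

theorem isUnit_schur_of_isUnit_fromBlocks {A : Matrix m₁ m₁ α} {B : Matrix m₁ m₂ α}
    {C : Matrix m₂ m₁ α} {D : Matrix m₂ m₂ α} (h : IsUnit (fromBlocks A B C D)) (hD : IsUnit D) :
    IsUnit (A - B * D⁻¹ * C) := by
  have := hD.invertible
  rw [← invOf_eq_nonsing_inv]
  exact isUnit_fromBlocks_iff_of_invertible₂₂.1 h

theorem mul_inv_mul_eq_submatrix_equiv {m : Type*} [Fintype m] [DecidableEq m]
    (X : Matrix l m α) (Z : Matrix m m α) (Y : Matrix m r α) (e : m₁ ≃ m) :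
    X * Z⁻¹ * Y = X.submatrix id e * (Z.submatrix e e)⁻¹ * Y.submatrix e id := by
  rw [inv_submatrix_equiv, submatrix_mul_equiv, submatrix_mul_equiv, submatrix_id_id]

end SchurComplement

section Blocks

variable (S : Matrix (Fin n) (Fin n) ℝ) {c d : Finset (Fin n)}

theorem blk_submatrix_union_right (hcd : Disjoint c d) (x : Finset (Fin n)) :
    (blk S x (c ∪ d)).submatrix id (Equiv.Finset.union c d hcd) =
      fromCols (blk S x c) (blk S x d) := by
  ext i (j | j) <;> rfl

theorem blk_submatrix_union_left (hcd : Disjoint c d) (y : Finset (Fin n)) :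
    (blk S (c ∪ d) y).submatrix (Equiv.Finset.union c d hcd) id =
      fromRows (blk S c y) (blk S d y) := by
  ext (i | i) j <;> rfl

theorem blk_submatrix_union (hcd : Disjoint c d) :
    (blk S (c ∪ d) (c ∪ d)).submatrix (Equiv.Finset.union c d hcd) (Equiv.Finset.union c d hcd) =
      fromBlocks (blk S c c) (blk S c d) (blk S d c) (blk S d d) := by
  ext (i | i) (j | j) <;> rfl

variable {S}

theorem isUnit_blk (hS : S.PosDef) (x : Finset (Fin n)) : IsUnit (blk S x x) :=
  (hS.submatrix Subtype.val_injective).isUnit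

theorem isUnit_condCov (hS : S.PosDef) (hcd : Disjoint c d) : IsUnit (condCov S c c d) := by
  refine isUnit_schur_of_isUnit_fromBlocks ?_ (isUnit_blk hS d)
  rw [← blk_submatrix_union S hcd]
  exact (hS.submatrix (Subtype.val_injective.comp (Equiv.Finset.union c d hcd).injective)).isUnit

theorem condCov_union (hS : S.PosDef) (hcd : Disjoint c d) (x y : Finset (Fin n)) :
    condCov S x y (c ∪ d) =
      condCov S x y d - condCov S x c d * (condCov S c c d)⁻¹ * condCov S c y d := by
  rw [condCov, mul_inv_mul_eq_submatrix_equiv _ _ _ (Equiv.Finset.union c d hcd),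
    blk_submatrix_union_right, blk_submatrix_union_left, blk_submatrix_union,
    fromCols_mul_inv_fromBlocks_mul_fromRows _ _ _ _ (isUnit_blk hS d) (isUnit_condCov hS hcd),
    ← sub_sub]
  rfl

end Blocks

theorem condCov_eq_zero_of_subset {S : Matrix (Fin n) (Fin n) ℝ} {x y y' z : Finset (Fin n)}
    (h : condCov S x y' z = 0) (hy : y ⊆ y') : condCov S x y z = 0 := by
  ext i j
  exact congrFun (congrFun h i) ⟨j, hy j.2⟩

theorem condCov_eq_zero_of_regCoef_eq_zero {S : Matrix (Fin n) (Fin n) ℝ}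
    {x y z : Finset (Fin n)} (hU : IsUnit (condCov S y y z)) (h : regCoef S x y z = 0) :
    condCov S x y z = 0 := by
  simpa [regCoef, Matrix.mul_assoc, Matrix.nonsing_inv_mul _ ((isUnit_iff_isUnit_det _).1 hU)]
    using congrArg (· * condCov S y y z) h

theorem regCoef_weakUnion_general (S : Matrix (Fin n) (Fin n) ℝ) (hS : S.PosDef)
    (a b c d : Finset (Fin n))
    (hbd : Disjoint b d) (hcd : Disjoint c d)
    (h : regCoef S a (b ∪ c) d = 0) :
    regCoef S a b (c ∪ d) = 0 := by
  have hcov : condCov S a (b ∪ c) d = 0 :=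
    condCov_eq_zero_of_regCoef_eq_zero
      (isUnit_condCov hS (Finset.disjoint_union_left.2 ⟨hbd, hcd⟩)) h
  rw [regCoef, condCov_union hS hcd, condCov_eq_zero_of_subset hcov Finset.subset_union_left,
    condCov_eq_zero_of_subset hcov Finset.subset_union_right]
  simp

/-- weak union, `Π_{a|bc.d} = 0` implies `Π_{a|b.cd} = 0`. -/
theorem regCoef_weakUnion (S : Matrix (Fin n) (Fin n) ℝ) (hS : S.PosDef)
    (a b c d : Finset (Fin n))
    (hab : Disjoint a b) (hac : Disjoint a c) (had : Disjoint a d)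
    (hbc : Disjoint b c) (hbd : Disjoint b d) (hcd : Disjoint c d)
    (h : regCoef S a (b ∪ c) d = 0) :
    regCoef S a b (c ∪ d) = 0 :=
  regCoef_weakUnion_general S hS a b c d hbd hcd h
end

section
/- For a positive definite matrix Σ with index set partitioned into a and b, the regression coefficient block satisfies (Π_{a|b.cd} Π_{a|c.bd}) = −(Σ^{aa})⁻¹(Σ^{ab} Σ^{ac}), where Σ^{xy} are blocks of the concentration matrix Σ⁻¹ under a finer partition (a,b,c,d). -/
variable {n : ℕ}

/-!
Write `P = Σ⁻¹` and split the index set as `a ∪ b ∪ z`. The `(a,b)` and `(a,z)` blocks of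
`P Σ = 1` read `P_aa Σ_ab + P_ab Σ_bb + P_az Σ_zb = 0` and
`P_aa Σ_az + P_ab Σ_bz + P_az Σ_zz = 0`.
Eliminating `P_az` through the second equation leaves `P_aa Σ_{ab|z} + P_ab Σ_{bb|z} = 0`, which
solves to `Π_{a|b.z} = -P_aa⁻¹ P_ab`. The Schur complement `Σ_{bb|z}` is invertible because
`det Σ_{(b∪z)(b∪z)} = det Σ_zz · det Σ_{bb|z}`.
-/

open Matrix Finset

theorem mul_sub_add_mul_sub_eq_zero {ι κ μ ν ρ : Type*} [Fintype κ] [Fintype μ] [Fintype ν]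
    [DecidableEq ν] {X : Matrix ι κ ℝ} {Y : Matrix ι μ ℝ} {Z : Matrix ι ν ℝ}
    {A : Matrix κ ρ ℝ} {B : Matrix μ ρ ℝ} {C : Matrix ν ρ ℝ}
    {E : Matrix κ ν ℝ} {F : Matrix μ ν ℝ} {D : Matrix ν ν ℝ} (hD : IsUnit D.det)
    (h₁ : X * A + Y * B + Z * C = 0) (h₂ : X * E + Y * F + Z * D = 0) :
    X * (A - E * D⁻¹ * C) + Y * (B - F * D⁻¹ * C) = 0 := by
  calc X * (A - E * D⁻¹ * C) + Y * (B - F * D⁻¹ * C)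
      = (X * A + Y * B + Z * C) - (X * E + Y * F + Z * D) * D⁻¹ * C := by
        simp only [Matrix.mul_sub, Matrix.add_mul, Matrix.mul_assoc,
          mul_nonsing_inv_cancel_left _ _ hD]
        abel
    _ = 0 := by rw [h₁, h₂, Matrix.zero_mul, Matrix.zero_mul, sub_zero]

theorem neg_inv_mul_eq_mul_inv {ι κ : Type*} [Fintype ι] [Fintype κ] [DecidableEq ι]
    [DecidableEq κ] {M : Matrix ι ι ℝ} {N : Matrix ι κ ℝ} {K : Matrix ι κ ℝ}
    {W : Matrix κ κ ℝ} (hM : IsUnit M.det) (hW : IsUnit W.det) (h : M * K + N * W = 0) :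
    -(M⁻¹ * N) = K * W⁻¹ := by
  have hN : N = -(M * K) * W⁻¹ := by
    rw [← eq_neg_of_add_eq_zero_right h, mul_nonsing_inv_cancel_right _ _ hW]
  rw [hN, Matrix.neg_mul, Matrix.mul_neg, neg_neg, Matrix.mul_assoc,
    nonsing_inv_mul_cancel_left _ _ hM]

section Blocks

variable (S T : Matrix (Fin n) (Fin n) ℝ)

theorem blk_mul (x y : Finset (Fin n)) :
    blk (S * T) x y = blk S x univ * blk T univ y := by
  ext i j
  simp only [blk, mul_apply, of_apply]
  exact (sum_coe_sort univ _).symm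

theorem blk_mul_blk_union {x y u v : Finset (Fin n)} (huv : Disjoint u v) :
    blk S x (u ∪ v) * blk T (u ∪ v) y = blk S x u * blk T u y + blk S x v * blk T v y := by
  ext i j
  simp only [blk, mul_apply, of_apply, Matrix.add_apply]
  rw [sum_coe_sort (u ∪ v) (fun k => S i k * T k j), sum_union huv,
    ← sum_coe_sort u, ← sum_coe_sort v]

theorem blk_one_of_disjoint {x y : Finset (Fin n)} (hxy : Disjoint x y) :
    blk (1 : Matrix (Fin n) (Fin n) ℝ) x y = 0 := by
  ext i j
  exact one_apply_ne fun hij => disjoint_left.mp hxy i.2 (hij ▸ j.2)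

variable {S}

theorem posDef_blk (hS : S.PosDef) (x : Finset (Fin n)) : (blk S x x).PosDef :=
  hS.submatrix Subtype.val_injective

theorem isUnit_det_blk (hS : S.PosDef) (x : Finset (Fin n)) : IsUnit (blk S x x).det :=
  (isUnit_iff_isUnit_det _).mp (posDef_blk hS x).isUnit

theorem isUnit_det_condCov (hS : S.PosDef) {y z : Finset (Fin n)} (hyz : Disjoint y z) :
    IsUnit (condCov S y y z).det := by
  let e : y ⊕ z → Fin n := Sum.elim Subtype.val Subtype.val
  have he : Function.Injective e := Subtype.val_injective.sumElim Subtype.val_injective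
    fun i j hij => disjoint_left.mp hyz i.2 (hij ▸ j.2)
  have hfrom : S.submatrix e e = fromBlocks (blk S y y) (blk S y z) (blk S z y) (blk S z z) := by
    ext (i | i) (j | j) <;> rfl
  let := (posDef_blk hS z).isUnit.invertible
  have hdet := (isUnit_iff_isUnit_det _).mp (hS.submatrix he).isUnit
  rw [hfrom, det_fromBlocks₂₂, invOf_eq_nonsing_inv] at hdet
  exact isUnit_of_mul_isUnit_right hdet

end Blocks

theorem regCoef_eq_neg_inv_mul_concentration {S : Matrix (Fin n) (Fin n) ℝ} (hS : S.PosDef)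
    {a b z : Finset (Fin n)} (hab : Disjoint a b) (haz : Disjoint a z) (hbz : Disjoint b z)
    (hcover : a ∪ b ∪ z = univ) :
    regCoef S a b z = -((blk S⁻¹ a a)⁻¹ * blk S⁻¹ a b) := by
  have hrow : ∀ y, Disjoint a y →
      blk S⁻¹ a a * blk S a y + blk S⁻¹ a b * blk S b y + blk S⁻¹ a z * blk S z y = 0 := by
    intro y hay
    rw [← blk_one_of_disjoint hay, ← nonsing_inv_mul S ((isUnit_iff_isUnit_det S).mp hS.isUnit),
      blk_mul, ← hcover, blk_mul_blk_union _ _ (disjoint_union_left.mpr ⟨haz, hbz⟩),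
      blk_mul_blk_union _ _ hab]
  have hschur := mul_sub_add_mul_sub_eq_zero (isUnit_det_blk hS z) (hrow b hab) (hrow z haz)
  exact (neg_inv_mul_eq_mul_inv (isUnit_det_blk hS.inv a) (isUnit_det_condCov hS hbz) hschur).symm

/-- `(Π_{a|b.cd}  Π_{a|c.bd}) = −(Σ^{aa})⁻¹ (Σ^{ab}  Σ^{ac})`,
where `Σ^{xy}` are blocks of the concentration matrix `Σ⁻¹` under the
partition `(a,b,c,d)` of the full index set. -/
theorem regCoef_concentration (S : Matrix (Fin n) (Fin n) ℝ) (hS : S.PosDef)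
    (a b c d : Finset (Fin n))
    (hab : Disjoint a b) (hac : Disjoint a c) (had : Disjoint a d)
    (hbc : Disjoint b c) (hbd : Disjoint b d) (hcd : Disjoint c d)
    (hcover : a ∪ b ∪ c ∪ d = Finset.univ) :
    regCoef S a b (c ∪ d) = -((blk S⁻¹ a a)⁻¹ * blk S⁻¹ a b) ∧
      regCoef S a c (b ∪ d) = -((blk S⁻¹ a a)⁻¹ * blk S⁻¹ a c) := by
  constructor
  · refine regCoef_eq_neg_inv_mul_concentration hS hab
      (disjoint_union_right.mpr ⟨hac, had⟩) (disjoint_union_right.mpr ⟨hbc, hbd⟩) ?_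
    rwa [← union_assoc]
  · refine regCoef_eq_neg_inv_mul_concentration hS hac
      (disjoint_union_right.mpr ⟨hab, had⟩) (disjoint_union_right.mpr ⟨hbc.symm, hcd⟩) ?_
    rwa [← union_assoc, union_right_comm a c b]
end
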